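/- arXiv:1807.02394 — 5 statements merged into one kernel-verified Lean document; each statement's English description precedes it below -/
import Mathlib

section
/- Let H be a real inner product space and B : H → H → ℝ a symmetric bilinear form. Let n be a natural number and let (ψ_j)_{j=1}^{n} and (φ_j)_{j=1}^{n} be families in H satisfying the biorthogonality condition ⟨ψ_i, φ_j⟩ = δ_{ij} for all 1 ≤ i, j ≤ n, and suppose that B(ψ_i, v) = 0 for every index i and every v ∈ H with ⟨v, φ_j⟩ = 0 for all j. Then for every u ∈ H, setting u* = Σ_{j=1}^{n} ⟨u, φ_j⟩ ψ_j, one has the Pythagorean decomposition B(u, u) = B(u*, u*) + B(u − u*, u − u*). -/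
/-!
Biorthogonality makes the residual `u - u*` annihilate every `φ j`, so each `ψ i`, and hence `u*`,
is `B`-orthogonal to it; with symmetry both cross terms of `B (u* + (u - u*)) (u* + (u - u*))` vanish.
-/

open scoped RealInnerProductSpace

theorem LinearMap.apply_add_add_of_apply_eq_zero {R M : Type*} [CommRing R] [AddCommGroup M]
    [Module R M] (B : M →ₗ[R] M →ₗ[R] R) {x y : M} (hxy : B x y = 0) (hyx : B y x = 0) :
    B (x + y) (x + y) = B x x + B y y := by
  simp only [map_add, LinearMap.add_apply, hxy, hyx, add_zero, zero_add]

theorem inner_sub_sum_biorthogonal_eq_zero {H ι : Type*} [NormedAddCommGroup H]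
    [InnerProductSpace ℝ H] [Fintype ι] [DecidableEq ι] {ψ φ : ι → H}
    (hbiortho : ∀ i j, ⟪ψ i, φ j⟫ = if i = j then (1 : ℝ) else 0) (u : H) (j : ι) :
    ⟪u - ∑ i, ⟪u, φ i⟫ • ψ i, φ j⟫ = 0 := by
  simp [inner_sub_left, sum_inner, real_inner_smul_left, hbiortho]

/-- Pythagorean decomposition of the energy via the biorthogonal
energy-minimizing basis (Lemma 3.1 of the paper, abstract form). -/
theorem energy_pythagorean_decomposition
    {H : Type*} [NormedAddCommGroup H] [InnerProductSpace ℝ H]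
    (B : H →ₗ[ℝ] H →ₗ[ℝ] ℝ) (hBsymm : ∀ x y : H, B x y = B y x)
    (n : ℕ) (ψ φ : Fin n → H)
    (hbiortho : ∀ i j : Fin n, ⟪ψ i, φ j⟫ = if i = j then (1 : ℝ) else 0)
    (hortho : ∀ i : Fin n, ∀ v : H, (∀ j : Fin n, ⟪v, φ j⟫ = 0) → B (ψ i) v = 0)
    (u : H) :
    B u u = B (∑ j, ⟪u, φ j⟫ • ψ j) (∑ j, ⟪u, φ j⟫ • ψ j)
      + B (u - ∑ j, ⟪u, φ j⟫ • ψ j) (u - ∑ j, ⟪u, φ j⟫ • ψ j) := by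
  set uStar : H := ∑ j, ⟪u, φ j⟫ • ψ j
  have hresidual : ∀ j, ⟪u - uStar, φ j⟫ = 0 :=
    inner_sub_sum_biorthogonal_eq_zero hbiortho u
  have horth : B uStar (u - uStar) = 0 := by
    simp only [uStar, map_sum, map_smul, LinearMap.sum_apply, LinearMap.smul_apply,
      hortho _ _ hresidual, smul_zero, Finset.sum_const_zero]
  calc B u u = B (uStar + (u - uStar)) (uStar + (u - uStar)) := by rw [add_sub_cancel]
    _ = _ := B.apply_add_add_of_apply_eq_zero horth (by rw [hBsymm, horth])
end

section
/- Let H be a real Hilbert space with a Hilbert basis (orthonormal basis) (e_α) indexed by multi-indices α : Fin r → ℕ. Let u ∈ H, let ν : Fin r → ℕ satisfy ν_i ≥ 1 for every i, and suppose that for each i ∈ Fin r there exists v_i ∈ H such that (α_i(α_i + 1))^{ν_i} · |⟨u, e_α⟩| ≤ |⟨v_i, e_α⟩| for every multi-index α. Then for every N : Fin r → ℕ with N_i ≥ 1 for all i, the truncation over the box {α : α_i ≤ N_i for all i} satisfies ‖u − Σ_{α : ∀ i, α_i ≤ N_i} ⟨u, e_α⟩ e_α‖² ≤ Σ_{i=1}^{r}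 N_i^{−4ν_i} · ‖v_i‖². -/
/-!
Expand the truncation error `w = u - P_N u` in the Hilbert basis: its coefficients vanish on the
box and agree with those of `u` off it. A multi-index `α` off the box has some coordinate
`α i > N i`, and there `N i ^ 2 ≤ α i (α i + 1)` turns the coefficient hypothesis into
`⟪u, e α⟫ ^ 2 ≤ N i ^ (-4 ν i) ⟪v i, e α⟫ ^ 2`. Bounding by the sum over all directions and summing
over `α` with Parseval's identity gives the estimate.
-/

open scoped RealInnerProductSpace

theorem HilbertBasis.hasSum_inner_sq {ι E : Type*} [NormedAddCommGroup E]
    [InnerProductSpace ℝ E] (b : HilbertBasis ι ℝ E) (x : E) :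
    HasSum (fun i => ⟪x, b i⟫ ^ 2) (‖x‖ ^ 2) := by
  simpa only [sq, real_inner_comm x (b _), real_inner_self_eq_norm_sq] using
    b.hasSum_inner_mul_inner x x

theorem Orthonormal.inner_sub_sum_inner_smul {ι E : Type*} [DecidableEq ι]
    [NormedAddCommGroup E] [InnerProductSpace ℝ E] {v : ι → E} (hv : Orthonormal ℝ v) (x : E) (s : Finset ι) (i : ι) :
    ⟪x - ∑ j ∈ s, ⟪x, v j⟫ • v j, v i⟫ = if i ∈ s then 0 else ⟪x, v i⟫ := by
  simp only [inner_sub_left, sum_inner, inner_smul_left, orthonormal_iff_ite.mp hv, mul_boole,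
    Finset.sum_ite_eq', conj_trivial]
  split_ifs <;> simp

theorem sq_le_inv_pow_mul_sq {n a k : ℕ} {x y : ℝ} (hn : 0 < n) (hna : n ≤ a)
    (h : ((a * (a + 1) : ℕ) : ℝ) ^ k * |x| ≤ |y|) :
    x ^ 2 ≤ ((n : ℝ) ^ (4 * k))⁻¹ * y ^ 2 := by
  have hsq : ((n : ℝ) ^ 2) ≤ ((a * (a + 1) : ℕ) : ℝ) := by
    rw [sq]
    exact_mod_cast Nat.mul_le_mul hna (Nat.le_succ_of_le hna)
  have hxy : ((n : ℝ) ^ 2) ^ k * |x| ≤ |y| :=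
    le_trans (mul_le_mul_of_nonneg_right (pow_le_pow_left₀ (by positivity) hsq k)
      (abs_nonneg x)) h
  rw [le_inv_mul_iff₀ (by positivity)]
  calc (n : ℝ) ^ (4 * k) * x ^ 2 = (((n : ℝ) ^ 2) ^ k * |x|) ^ 2 := by
        rw [mul_pow, sq_abs, ← pow_mul, ← pow_mul]
        ring_nf
    _ ≤ |y| ^ 2 := pow_le_pow_left₀ (by positivity) hxy 2
    _ = y ^ 2 := sq_abs y

theorem hilbert_basis_tensor_truncation_error_general
    {H : Type*} [NormedAddCommGroup H] [InnerProductSpace ℝ H]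
    (r : ℕ) (e : HilbertBasis (Fin r → ℕ) ℝ H)
    (u : H) (ν : Fin r → ℕ) (v : Fin r → H)
    (hcoeff : ∀ i : Fin r, ∀ α : Fin r → ℕ,
      ((α i * (α i + 1) : ℕ) : ℝ) ^ (ν i) * |⟪u, e α⟫| ≤ |⟪v i, e α⟫|) :
    ∀ N : Fin r → ℕ, (∀ i, 1 ≤ N i) →
      ‖u - ∑ α ∈ Fintype.piFinset (fun i => Finset.range (N i + 1)),
          ⟪u, e α⟫ • e α‖ ^ 2
        ≤ ∑ i : Fin r, (((N i : ℝ)) ^ (4 * ν i))⁻¹ * ‖v i‖ ^ 2 := by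
  intro N hN
  set box := Fintype.piFinset (fun i => Finset.range (N i + 1))
  set c : Fin r → ℝ := fun i => ((N i : ℝ) ^ (4 * ν i))⁻¹
  have hcoeff_sq : ∀ α, ⟪u - ∑ β ∈ box, ⟪u, e β⟫ • e β, e α⟫ ^ 2
      ≤ ∑ i, c i * ⟪v i, e α⟫ ^ 2 := by
    intro α
    rw [e.orthonormal.inner_sub_sum_inner_smul]
    split_ifs with hα
    · rw [zero_pow two_ne_zero]
      exact Finset.sum_nonneg fun i _ => by positivity
    · obtain ⟨i, hi⟩ : ∃ i, N i < α i := by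
        simpa [box, Fintype.mem_piFinset, Nat.lt_succ_iff] using hα
      exact (sq_le_inv_pow_mul_sq (hN i) hi.le (hcoeff i α)).trans
        (Finset.single_le_sum (f := fun i => c i * ⟪v i, e α⟫ ^ 2)
          (fun j _ => by positivity) (Finset.mem_univ i))
  exact hasSum_le hcoeff_sq (e.hasSum_inner_sq _)
    (hasSum_sum fun i _ => (e.hasSum_inner_sq (v i)).mul_left (c i))

/-- Abstract form of Corollary 4.3 (tensorized spectral convergence of the
gPC projection): if for each direction `i` the coefficients of `u` in a
Hilbert basis indexed by multi-indices `α : Fin r → ℕ` satisfy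
`(α_i(α_i+1))^{ν_i} |⟪u, e α⟫| ≤ |⟪v_i, e α⟫|`, then the error of the
truncation over the box `{α | ∀ i, α_i ≤ N_i}` is bounded by
`∑ i, N_i^{-4ν_i} ‖v_i‖²`. -/
theorem hilbert_basis_tensor_truncation_error
    {H : Type*} [NormedAddCommGroup H] [InnerProductSpace ℝ H] [CompleteSpace H]
    (r : ℕ) (e : HilbertBasis (Fin r → ℕ) ℝ H)
    (u : H) (ν : Fin r → ℕ) (hν : ∀ i, 1 ≤ ν i) (v : Fin r → H)
    (hcoeff : ∀ i : Fin r, ∀ α : Fin r → ℕ,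
      ((α i * (α i + 1) : ℕ) : ℝ) ^ (ν i) * |⟪u, e α⟫| ≤ |⟪v i, e α⟫|) :
    ∀ N : Fin r → ℕ, (∀ i, 1 ≤ N i) →
      ‖u - ∑ α ∈ Fintype.piFinset (fun i => Finset.range (N i + 1)),
          ⟪u, e α⟫ • e α‖ ^ 2
        ≤ ∑ i : Fin r, (((N i : ℝ)) ^ (4 * ν i))⁻¹ * ‖v i‖ ^ 2 :=
  hilbert_basis_tensor_truncation_error_general r e u ν v hcoeff
end

section
/- Fix positive integers n, m, r and a real number α > 1. Let γ denote the standard Gaussian measure on ℝ^n (the n-fold product of the real Gaussian measure with mean 0 and variance 1), and let γ^{⊗r} be the r-fold product measure on (ℝ^n)^r, describing r independent standard Gaussian vectors ω^1, …, ω^r ∈ ℝ^n. Then for every continuous linear map T from the Euclidean space ℝ^n to the Euclidean space ℝ^m, γ^{⊗r}({(ω^1, …, ω^r) : ‖T‖ > α · √(2/π) · max_{1 ≤ j ≤ r} ‖T ω^j‖}) ≤ α^{−r}, where ‖T‖ is the operator norm of T and ‖T ω^j‖ the Euclidean norm. -/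
/-!
Attaining the operator norm on the compact unit ball gives `x₀` and the unit vector
`u = T x₀ / ‖T‖`; the functional `L = ⟪u, T ·⟫` has `‖L‖ = ‖T‖` and `|L x| ≤ ‖T x‖`.
Under the standard Gaussian, `L ω` is `N(0, ‖T‖²)`, whose density is at most
`1 / (√(2π) ‖T‖)`, so `‖T ω‖ < ε ‖T‖` has probability at most `2ε / √(2π) = √(2/π) ε`.
With `ε = 1 / (α √(2/π))` this is `1/α` for each test vector, and independence of the
`r` test vectors gives `α^{-r}`.
-/

open MeasureTheory ProbabilityTheory
open scoped RealInnerProductSpace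

namespace ContinuousLinearMap

theorem exists_norm_le_one_norm_apply_eq_opNorm {𝕜 E F : Type*} [DenselyNormedField 𝕜]
    [NormedAddCommGroup E] [NormedSpace 𝕜 E] [ProperSpace E] [NormedAddCommGroup F]
    [NormedSpace 𝕜 F] (T : E →L[𝕜] F) :
    ∃ x, ‖x‖ ≤ 1 ∧ ‖T x‖ = ‖T‖ := by
  have hK := (isCompact_closedBall (0 : E) 1).image T.continuous.norm
  obtain ⟨x, hx, hTx⟩ := hK.sSup_mem ((Metric.nonempty_closedBall.2 zero_le_one).image _)
  exact ⟨x, mem_closedBall_zero_iff.1 hx, hTx.trans T.sSup_unitClosedBall_eq_norm⟩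

theorem exists_strongDual_norm_eq_and_abs_le_norm_apply {E F : Type*} [NormedAddCommGroup E]
    [NormedSpace ℝ E] [ProperSpace E] [NormedAddCommGroup F] [InnerProductSpace ℝ F]
    (T : E →L[ℝ] F) :
    ∃ L : StrongDual ℝ E, ‖L‖ = ‖T‖ ∧ ∀ x, |L x| ≤ ‖T x‖ := by
  obtain ⟨x₀, hx₀, hTx₀⟩ := T.exists_norm_le_one_norm_apply_eq_opNorm
  set u := ‖T‖⁻¹ • T x₀
  have hu : ‖u‖ ≤ 1 := by
    rw [norm_smul, norm_inv, norm_norm, hTx₀]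
    exact inv_mul_le_one_of_le₀ le_rfl (norm_nonneg T)
  have hL : ∀ x, |innerSL ℝ u (T x)| ≤ ‖T x‖ := fun x =>
    calc |⟪u, T x⟫| ≤ ‖u‖ * ‖T x‖ := abs_real_inner_le_norm _ _
      _ ≤ ‖T x‖ := mul_le_of_le_one_left (norm_nonneg _) hu
  have hLx₀ : innerSL ℝ u (T x₀) = ‖T‖ := by
    rw [innerSL_apply_apply, real_inner_smul_left, real_inner_self_eq_norm_sq, hTx₀, sq,
      ← mul_assoc, inv_mul_mul_self]
  refine ⟨(innerSL ℝ u).comp T, le_antisymm ?_ ?_, hL⟩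
  · exact opNorm_le_bound _ (norm_nonneg T) fun x => (hL x).trans (T.le_opNorm x)
  · calc ‖T‖ ≤ |innerSL ℝ u (T x₀)| := hLx₀ ▸ le_abs_self _
      _ = ‖(innerSL ℝ u).comp T x₀‖ := (Real.norm_eq_abs _).symm
      _ ≤ ‖(innerSL ℝ u).comp T‖ := unit_le_opNorm _ _ hx₀

end ContinuousLinearMap

namespace ProbabilityTheory

theorem gaussianReal_le_ofReal_mul_volume (μ : ℝ) {v : NNReal} (hv : v ≠ 0) (s : Set ℝ) :
    gaussianReal μ v s ≤ ENNReal.ofReal (√(2 * Real.pi * v))⁻¹ * volume s := by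
  rw [gaussianReal_apply μ hv, ← setLIntegral_const]
  refine lintegral_mono fun x => ENNReal.ofReal_le_ofReal ?_
  rw [gaussianPDFReal]
  refine mul_le_of_le_one_right (by positivity) (Real.exp_le_one_iff.2 ?_)
  exact div_nonpos_of_nonpos_of_nonneg (neg_nonpos.2 (sq_nonneg _)) (by positivity)

section stdGaussian

variable {E : Type*} [NormedAddCommGroup E] [InnerProductSpace ℝ E] [FiniteDimensional ℝ E]
  [MeasurableSpace E] [BorelSpace E]

theorem stdGaussian_abs_apply_lt_le {L : StrongDual ℝ E} (hL : L ≠ 0) (t : ℝ) :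
    stdGaussian E {x | |L x| < t} ≤ ENNReal.ofReal (√(2 / Real.pi) * t / ‖L‖) := by
  have hLpos : 0 < ‖L‖ := norm_pos_iff.2 hL
  have hlaw : (stdGaussian E).map L = gaussianReal 0 (‖L‖ ^ 2).toNNReal := by
    rw [IsGaussian.map_eq_gaussianReal, integral_strongDual_stdGaussian,
      variance_dual_stdGaussian]
  have hset : {x | |L x| < t} = L ⁻¹' Set.Ioo (-t) t := by ext; simp [abs_lt]
  rw [hset, ← Measure.map_apply L.continuous.measurable measurableSet_Ioo, hlaw]
  refine (gaussianReal_le_ofReal_mul_volume 0 (by positivity) _).trans ?_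
  rw [Real.volume_Ioo, ← ENNReal.ofReal_mul (by positivity)]
  refine ENNReal.ofReal_le_ofReal (le_of_eq ?_)
  have hsqrt : √(2 * Real.pi * (‖L‖ ^ 2).toNNReal) = √(2 * Real.pi) * ‖L‖ := by
    rw [Real.coe_toNNReal _ (by positivity), Real.sqrt_mul (by positivity),
      Real.sqrt_sq hLpos.le]
  have hπ : √(2 / Real.pi) * √(2 * Real.pi) = 2 := by
    rw [← Real.sqrt_mul (by positivity), show 2 / Real.pi * (2 * Real.pi) = 2 * 2 by
      field_simp, Real.sqrt_mul_self zero_le_two]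
  have : 0 < √(2 * Real.pi) := by positivity
  rw [hsqrt]
  field_simp
  linear_combination -t * hπ

theorem stdGaussian_norm_apply_lt_mul_opNorm_le {F : Type*} [NormedAddCommGroup F]
    [InnerProductSpace ℝ F] (T : E →L[ℝ] F) (ε : ℝ) :
    stdGaussian E {x | ‖T x‖ < ε * ‖T‖} ≤ ENNReal.ofReal (√(2 / Real.pi) * ε) := by
  rcases eq_or_ne T 0 with rfl | hT
  · simp
  obtain ⟨L, hLT, hL⟩ := T.exists_strongDual_norm_eq_and_abs_le_norm_apply
  have hTpos : 0 < ‖T‖ := norm_pos_iff.2 hT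
  have hL0 : L ≠ 0 := norm_pos_iff.1 (hLT ▸ hTpos)
  calc stdGaussian E {x | ‖T x‖ < ε * ‖T‖}
      ≤ stdGaussian E {x | |L x| < ε * ‖T‖} := measure_mono fun x hx => (hL x).trans_lt hx
    _ ≤ ENNReal.ofReal (√(2 / Real.pi) * (ε * ‖T‖) / ‖L‖) := stdGaussian_abs_apply_lt_le hL0 _
    _ = ENNReal.ofReal (√(2 / Real.pi) * ε) := by
      rw [hLT, ← mul_assoc, mul_div_cancel_right₀ _ hTpos.ne']

end stdGaussian

theorem pi_gaussianReal_norm_apply_toLp_lt_mul_opNorm_le {ι F : Type*} [Fintype ι]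
    [NormedAddCommGroup F] [InnerProductSpace ℝ F] (T : EuclideanSpace ℝ ι →L[ℝ] F) (ε : ℝ) :
    Measure.pi (fun _ : ι => gaussianReal 0 1) {x | ‖T (WithLp.toLp 2 x)‖ < ε * ‖T‖} ≤
      ENNReal.ofReal (√(2 / Real.pi) * ε) := by
  have hmeas : MeasurableSet {y : EuclideanSpace ℝ ι | ‖T y‖ < ε * ‖T‖} :=
    measurableSet_lt T.continuous.norm.measurable measurable_const
  have := stdGaussian_norm_apply_lt_mul_opNorm_le T ε
  rwa [← map_pi_eq_stdGaussian, Measure.map_apply (by fun_prop) hmeas] at this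

end ProbabilityTheory

theorem gaussian_operator_norm_estimate_general
    (n m r : ℕ)
    (α : ℝ) (hα : 1 < α) :
    ∀ T : EuclideanSpace ℝ (Fin n) →L[ℝ] EuclideanSpace ℝ (Fin m),
      (Measure.pi fun _ : Fin r =>
          (Measure.pi fun _ : Fin n => gaussianReal 0 1))
        {ω : Fin r → Fin n → ℝ |
          ‖T‖ > α * Real.sqrt (2 / Real.pi) *
            ⨆ j : Fin r, ‖T ((WithLp.equiv 2 (∀ _ : Fin n, ℝ)).symm (ω j))‖}
        ≤ ENNReal.ofReal ((α ^ r)⁻¹) := by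
  intro T
  have hsqrt : 0 < √(2 / Real.pi) := by have := Real.pi_pos; positivity
  have hc : 0 < α * √(2 / Real.pi) := by positivity
  set A := {x : Fin n → ℝ | ‖T (WithLp.toLp 2 x)‖ < (α * √(2 / Real.pi))⁻¹ * ‖T‖}
  have hsub : {ω : Fin r → Fin n → ℝ | ‖T‖ > α * √(2 / Real.pi) *
      ⨆ j, ‖T ((WithLp.equiv 2 (∀ _ : Fin n, ℝ)).symm (ω j))‖} ⊆ Set.univ.pi fun _ => A :=
    fun ω hω j _ => (le_ciSup (Set.finite_range _).bddAbove j).trans_lt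
      ((lt_inv_mul_iff₀ hc).2 hω)
  have hA : Measure.pi (fun _ : Fin n => gaussianReal 0 1) A ≤ ENNReal.ofReal α⁻¹ := by
    have hε : √(2 / Real.pi) * (α * √(2 / Real.pi))⁻¹ = α⁻¹ := by field_simp
    exact hε ▸ pi_gaussianReal_norm_apply_toLp_lt_mul_opNorm_le T (α * √(2 / Real.pi))⁻¹
  calc _ ≤ Measure.pi (fun _ : Fin r => Measure.pi fun _ : Fin n => gaussianReal 0 1)
          (Set.univ.pi fun _ => A) := measure_mono hsub
    _ = Measure.pi (fun _ : Fin n => gaussianReal 0 1) A ^ r := by simp [Measure.pi_pi]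
    _ ≤ ENNReal.ofReal α⁻¹ ^ r := by gcongr
    _ = ENNReal.ofReal ((α ^ r)⁻¹) := by
      rw [← ENNReal.ofReal_pow (by positivity), inv_pow]

/-- Probabilistic a posteriori operator-norm estimate (Appendix Lemma B.1 of
the paper, after Woolfe et al.): for `r` independent standard Gaussian vectors
`ω^1, …, ω^r` in `ℝ^n` and any continuous linear map `T : ℝ^n → ℝ^m`, except
with probability at most `α^{-r}` one has
`‖T‖ ≤ α √(2/π) max_j ‖T ω^j‖`. -/
theorem gaussian_operator_norm_estimate
    (n m r : ℕ) (hn : 0 < n) (hm : 0 < m) (hr : 0 < r)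
    (α : ℝ) (hα : 1 < α) :
    ∀ T : EuclideanSpace ℝ (Fin n) →L[ℝ] EuclideanSpace ℝ (Fin m),
      (Measure.pi fun _ : Fin r =>
          (Measure.pi fun _ : Fin n => gaussianReal 0 1))
        {ω : Fin r → Fin n → ℝ |
          ‖T‖ > α * Real.sqrt (2 / Real.pi) *
            ⨆ j : Fin r, ‖T ((WithLp.equiv 2 (∀ _ : Fin n, ℝ)).symm (ω j))‖}
        ≤ ENNReal.ofReal ((α ^ r)⁻¹) :=
  gaussian_operator_norm_estimate_general n m r α hα
end

section
/- Let u : ℝ → ℝ be twice continuously differentiable and let k ≥ 1 be a natural number. Then ∫_{−1}^{1} u(x) · P_k(x) dx = −(1/(k(k+1))) · ∫_{−1}^{1} (ℒu)(x) · P_k(x) dx, where P_k(x) is the value at x of the Rodrigues-form Legendre polynomial P_k = derivative^[k]((X² − 1)^k) and (ℒu)(x) = d/dx((1 − x²) · u'(x)). -/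
open Polynomial

/-!
The Legendre operator is symmetric on `[-1, 1]`: integrating by parts twice, all boundary
terms carry the factor `1 - x²`, which vanishes at `±1`, so `(ℒu, P_k) = (u, ℒP_k)`. And `P_k`
is an eigenfunction, `ℒP_k = -k(k+1) P_k`, obtained by differentiating the identity
`(X² - 1) f' = 2k X f` for `f = (X² - 1)^k` a further `k + 1` times.
-/

/-- The Rodrigues-form Legendre polynomial `P_k = d^k/dx^k ((x² - 1)^k)`. -/
noncomputable def legendreRodrigues (k : ℕ) : ℝ[X] :=
  derivative^[k] ((X ^ 2 - 1) ^ k)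

/-- The Legendre differential operator `(ℒw)(x) = d/dx((1 - x²) w'(x))`. -/
noncomputable def legendreOp (w : ℝ → ℝ) : ℝ → ℝ :=
  fun x => deriv (fun y => (1 - y ^ 2) * deriv w y) x

namespace Polynomial

variable {R : Type*} [CommRing R]

theorem sq_sub_one_mul_derivative_sq_sub_one_pow (k : ℕ) :
    (X ^ 2 - 1 : R[X]) * derivative ((X ^ 2 - 1) ^ k) = C (2 * k : R) * X * (X ^ 2 - 1) ^ k := by
  rcases k with _ | k
  · simp
  · rw [derivative_pow, Nat.add_sub_cancel, pow_succ (X ^ 2 - 1 : R[X]) k]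
    simp only [derivative_sub, derivative_X_sq, derivative_one, map_mul, map_ofNat, map_natCast]
    push_cast
    ring

-- The derivative of the previous identity, in the shape of the Leibniz rules
-- `iterate_derivative_derivative_mul_X_sq` and `iterate_derivative_derivative_mul_X`.
theorem derivative_derivative_sq_sub_one_pow_mul_X_sq (k : ℕ) :
    derivative^[2] ((X ^ 2 - 1 : R[X]) ^ k) * X ^ 2 = derivative^[2] ((X ^ 2 - 1) ^ k)
      + C (2 * (k - 1) : R) * (derivative ((X ^ 2 - 1) ^ k) * X)
      + C (2 * k : R) * (X ^ 2 - 1) ^ k := by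
  have h := congrArg derivative (sq_sub_one_mul_derivative_sq_sub_one_pow (R := R) k)
  simp only [derivative_mul, derivative_sub, derivative_X_sq, derivative_one, derivative_C,
    derivative_X] at h
  simp only [Function.iterate_succ_apply, Function.iterate_zero_apply, map_mul, map_sub,
    map_ofNat, map_one, map_natCast] at h ⊢
  linear_combination h

theorem derivative_one_sub_sq_mul_derivative_iterate_derivative_sq_sub_one_pow (k : ℕ) :
    derivative ((1 - X ^ 2) * derivative (derivative^[k] ((X ^ 2 - 1 : R[X]) ^ k)))
      = C (-(k * (k + 1)) : R) * derivative^[k] ((X ^ 2 - 1) ^ k) := by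
  have h := congrArg (derivative^[k]) (derivative_derivative_sq_sub_one_pow_mul_X_sq (R := R) k)
  rw [iterate_derivative_derivative_mul_X_sq, iterate_map_add, iterate_map_add,
    iterate_derivative_C_mul, iterate_derivative_C_mul, iterate_derivative_derivative_mul_X,
    ← Function.iterate_add_apply, add_comm k 2] at h
  have hcast : ((k * (k - 1) : ℕ) : R[X]) = C ((k : R) * (k - 1)) := by
    rcases k with _ | k <;> simp
  simp only [nsmul_eq_mul, hcast, Nat.cast_mul, Nat.cast_ofNat, Function.iterate_add_apply,
    Function.iterate_succ_apply', Function.iterate_zero_apply] at h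
  simp only [derivative_mul, derivative_sub, derivative_X_sq, derivative_one]
  simp only [map_mul, map_sub, map_neg, map_add, map_natCast, map_one, map_ofNat] at h ⊢
  linear_combination -h

end Polynomial

theorem legendreOp_eval (p : ℝ[X]) :
    legendreOp (fun x => p.eval x) = fun x => (derivative ((1 - X ^ 2) * derivative p)).eval x := by
  have hflux : (fun y : ℝ => (1 - y ^ 2) * deriv (fun x => p.eval x) y)
      = fun y => ((1 - X ^ 2) * derivative p).eval y := by
    funext y
    simp [Polynomial.deriv]
  funext x
  rw [legendreOp, hflux, Polynomial.deriv]

theorem integral_legendreOp_mul {u v : ℝ → ℝ} (hu : ContDiff ℝ 2 u) (hv : ContDiff ℝ 1 v) :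
    ∫ x in (-1 : ℝ)..1, legendreOp u x * v x
      = -∫ x in (-1 : ℝ)..1, (1 - x ^ 2) * deriv u x * deriv v x := by
  have hu' : ContDiff ℝ 1 (deriv u) := hu.iterate_deriv' 1 1
  have hflux : ContDiff ℝ 1 fun y => (1 - y ^ 2) * deriv u y := by fun_prop
  have hibp := intervalIntegral.integral_mul_deriv_eq_deriv_mul
    (fun x _ => ((hv.differentiable one_ne_zero) x).hasDerivAt)
    (fun x _ => ((hflux.differentiable one_ne_zero) x).hasDerivAt)
    ((hv.continuous_deriv le_rfl).intervalIntegrable (-1) 1)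
    ((hflux.continuous_deriv le_rfl).intervalIntegrable (-1) 1)
  simp only [one_pow, neg_one_sq, sub_self, zero_mul, mul_zero, zero_sub] at hibp
  simp only [legendreOp, mul_comm _ (v _), hibp, mul_comm (deriv v _), mul_assoc]

theorem integral_legendreOp_mul_eq_integral_mul_legendreOp {u v : ℝ → ℝ} (hu : ContDiff ℝ 2 u)
    (hv : ContDiff ℝ 2 v) :
    ∫ x in (-1 : ℝ)..1, legendreOp u x * v x = ∫ x in (-1 : ℝ)..1, u x * legendreOp v x := by
  simp_rw [integral_legendreOp_mul hu (hv.of_le one_le_two), mul_comm (u _),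
    integral_legendreOp_mul hv (hu.of_le one_le_two), mul_right_comm]

/-- Single-step coefficient identity from the proof of Lemma 4.1 of the
paper: `(u, L_k) = -(1/(k(k+1))) (ℒu, L_k)` for a `C²` function `u` and
`k ≥ 1`. -/
theorem legendre_coefficient_step
    (u : ℝ → ℝ) (hu : ContDiff ℝ 2 u) (k : ℕ) (hk : 1 ≤ k) :
    ∫ x in (-1 : ℝ)..1, u x * (legendreRodrigues k).eval x
      = -(1 / ((k : ℝ) * (k + 1))) *
          ∫ x in (-1 : ℝ)..1, legendreOp u x * (legendreRodrigues k).eval x := by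
  have hk₀ : (0 : ℝ) < k := by exact_mod_cast hk
  have hP : legendreOp (fun x => (legendreRodrigues k).eval x)
      = fun x => -((k : ℝ) * (k + 1)) * (legendreRodrigues k).eval x := by
    rw [legendreOp_eval, legendreRodrigues,
      derivative_one_sub_sq_mul_derivative_iterate_derivative_sq_sub_one_pow]
    simp only [eval_mul, eval_C]
  have hP_smooth : ContDiff ℝ 2 fun x => (legendreRodrigues k).eval x := by
    simpa using (legendreRodrigues k).contDiff_aeval (𝕜 := ℝ) 2
  rw [integral_legendreOp_mul_eq_integral_mul_legendreOp hu hP_smooth, hP]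
  simp only [mul_left_comm (u _), intervalIntegral.integral_const_mul]
  field_simp
end

section
/- Let u : ℝ → ℝ be infinitely differentiable (smooth), let k ≥ 1 and l ≥ 0 be natural numbers. Then ∫_{−1}^{1} u(x) · P_k(x) dx = (−1/(k(k+1)))^l · ∫_{−1}^{1} (ℒ^{[l]}u)(x) · P_k(x) dx, where ℒ^{[l]} denotes the l-fold iterate of the Legendre differential operator (ℒw)(x) = d/dx((1 − x²) · w'(x)) and P_k(x) is the value at x of the Rodrigues-form Legendre polynomial P_k = derivative^[k]((X² − 1)^k). -/
open Polynomial
open scoped ContDiff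

lemma legendre_ode (k : ℕ) (hk : 1 ≤ k) :
    derivative ((1 - X ^ 2) * derivative (legendreRodrigues k)) =
      -((k * (k + 1) : ℕ) : ℝ[X]) * legendreRodrigues k := by
  obtain ⟨m, rfl⟩ : ∃ m, k = m + 1 := ⟨k - 1, by omega⟩
  set f : ℝ[X] := (X ^ 2 - 1) ^ (m + 1) with hf
  have h1 : derivative (X ^ 2 - 1 : ℝ[X]) = 2 * X := by
    simp [derivative_sq]
    norm_cast
  have h2 : derivative (2 * X : ℝ[X]) = 2 := by
    rw [derivative_mul]; simp
  have h2' : derivative^[2] (X ^ 2 - 1 : ℝ[X]) = 2 := by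
    rw [show (2 : ℕ) = 1 + 1 from rfl, Function.iterate_succ_apply', Function.iterate_one, h1, h2]
  have hdeg : (X ^ 2 - 1 : ℝ[X]).natDegree = 2 := by
    simpa using natDegree_X_pow_sub_C (n := 2) (r := (1 : ℝ))
  have base : (X ^ 2 - 1 : ℝ[X]) * derivative f = ((2 * (m + 1) : ℕ) : ℝ[X]) * (X * f) := by
    have h3 : (X ^ 2 - 1 : ℝ[X]) * (X ^ 2 - 1) ^ (m + 1 - 1) = (X ^ 2 - 1) ^ (m + 1) := by
      rw [← pow_succ']
      norm_num
    rw [hf, derivative_pow, C_eq_natCast, h1, ← h3]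
    push_cast
    ring
  have main := congrArg (derivative^[m + 2]) base
  rw [iterate_derivative_natCast_mul] at main
  rw [iterate_derivative_mul, iterate_derivative_mul] at main
  simp only [Finset.sum_range_succ] at main
  have zL : ∀ j ∈ Finset.range m,
      (m + 2).choose j • (derivative^[m + 2 - j] (X ^ 2 - 1 : ℝ[X]) *
        derivative^[j] (derivative f)) = 0 := by
    intro j hj
    simp only [Finset.mem_range] at hj
    rw [iterate_derivative_eq_zero (by rw [hdeg]; omega), zero_mul, smul_zero]
  have zR : ∀ j ∈ Finset.range m,
      (m + 2).choose j • (derivative^[m + 2 - j] (X : ℝ[X]) * derivative^[j] f) = 0 := by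
    intro j hj
    simp only [Finset.mem_range] at hj
    rw [iterate_derivative_eq_zero (by rw [natDegree_X]; omega), zero_mul, smul_zero]
  rw [Finset.sum_eq_zero zL, Finset.sum_eq_zero zR] at main
  have hX2 : derivative^[2] (X : ℝ[X]) = 0 :=
    iterate_derivative_eq_zero (by rw [natDegree_X]; omega)
  simp only [show m + 2 - m = 2 from by omega, show m + 2 - (m + 1) = 1 from by omega,
    Nat.sub_self, Function.iterate_zero_apply, Function.iterate_one, h1, h2', hX2,
    derivative_X, Nat.choose_self, Nat.choose_succ_self_right,
    ← Function.iterate_succ_apply, zero_add, add_zero, smul_zero, zero_mul, one_smul, mul_one,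
    show m + 1 + 1 = m + 2 from rfl, show m + 2 + 1 = m + 3 from rfl] at main
  have hc : (2 * ((m + 2).choose m) : ℕ) = (m + 1) * (m + 2) := by
    have hsym : (m + 2).choose m = (m + 2).choose 2 := by
      rw [← Nat.choose_symm (by omega : m ≤ m + 2)]
      congr 1
      omega
    rw [hsym, Nat.choose_two_right]
    have hdvd : 2 ∣ (m + 2) * (m + 2 - 1) := by
      rw [show m + 2 - 1 = m + 1 from rfl, Nat.mul_comm]
      exact (Nat.even_mul_succ_self (m + 1)).two_dvd
    rw [Nat.mul_div_cancel' hdvd, show m + 2 - 1 = m + 1 from rfl]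
    ring
  have hc' : ((2 * ((m + 2).choose m) : ℕ) : ℝ[X]) = (((m + 1) * (m + 2) : ℕ) : ℝ[X]) := by
    exact_mod_cast congrArg (Nat.cast : ℕ → ℝ[X]) hc
  have h1' : derivative (1 - X ^ 2 : ℝ[X]) = -(2 * X) := by
    rw [show (1 - X ^ 2 : ℝ[X]) = -(X ^ 2 - 1) from by ring, derivative_neg, h1]
  simp only [legendreRodrigues, ← hf]
  rw [derivative_mul, h1']
  simp only [← Function.iterate_succ_apply']
  simp only [Nat.succ_eq_add_one, show m + 1 + 1 = m + 2 from rfl,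
    show m + 2 + 1 = m + 3 from rfl] at main ⊢
  simp only [nsmul_eq_mul] at main
  push_cast at main hc' ⊢
  linear_combination -main + (derivative^[m + 1] f) * hc'


lemma aux_g_smooth {w : ℝ → ℝ} (hw : ContDiff ℝ ∞ w) :
    ContDiff ℝ ∞ (fun y : ℝ => (1 - y ^ 2) * deriv w y) := by
  have hd : ContDiff ℝ ∞ (deriv w) := (contDiff_infty_iff_deriv.mp hw).2
  exact (contDiff_const.sub (contDiff_id.pow 2)).mul hd

lemma legendreOp_contDiff {w : ℝ → ℝ} (hw : ContDiff ℝ ∞ w) :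
    ContDiff ℝ ∞ (legendreOp w) :=
  (contDiff_infty_iff_deriv.mp (aux_g_smooth hw)).2

lemma legendre_step (w : ℝ → ℝ) (hw : ContDiff ℝ ∞ w) (k : ℕ) (hk : 1 ≤ k) :
    ∫ x in (-1 : ℝ)..1, legendreOp w x * (legendreRodrigues k).eval x
      = -((k : ℝ) * (k + 1)) * ∫ x in (-1 : ℝ)..1, w x * (legendreRodrigues k).eval x := by
  set P : ℝ[X] := legendreRodrigues k with hP
  set g : ℝ → ℝ := fun y => (1 - y ^ 2) * deriv w y with hg
  set q : ℝ[X] := (1 - X ^ 2) * derivative P with hq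
  have hgsm : ContDiff ℝ ∞ g := aux_g_smooth hw
  have hgd : ∀ x : ℝ, HasDerivAt g (legendreOp w x) x := fun x =>
    ((hgsm.differentiable (by simp)) x).hasDerivAt
  have hPd : ∀ x : ℝ, HasDerivAt (fun y => P.eval y) ((derivative P).eval x) x := fun x =>
    P.hasDerivAt x
  have hqd : ∀ x : ℝ, HasDerivAt (fun y => q.eval y) ((derivative q).eval x) x := fun x =>
    q.hasDerivAt x
  have hwd : ∀ x : ℝ, HasDerivAt w (deriv w x) x := fun x =>
    ((hw.differentiable (by simp)) x).hasDerivAt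
  have hcP : Continuous fun x : ℝ => P.eval x := P.continuous
  have hcP' : Continuous fun x : ℝ => (derivative P).eval x := (derivative P).continuous
  have hcq : Continuous fun x : ℝ => q.eval x := q.continuous
  have hcq' : Continuous fun x : ℝ => (derivative q).eval x := (derivative q).continuous
  have hcL : Continuous (legendreOp w) := (legendreOp_contDiff hw).continuous
  have hcg : Continuous g := hgsm.continuous
  have hcw : Continuous w := hw.continuous
  have hcw' : Continuous (deriv w) := (contDiff_infty_iff_deriv.mp hw).2.continuous
  have I1 := intervalIntegral.integral_mul_deriv_eq_deriv_mul
    (a := (-1 : ℝ)) (b := 1)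
    (fun x _ => hPd x) (fun x _ => hgd x)
    (hcP'.intervalIntegrable _ _) (hcL.intervalIntegrable _ _)
  have I2 := intervalIntegral.integral_mul_deriv_eq_deriv_mul
    (a := (-1 : ℝ)) (b := 1)
    (fun x _ => hwd x) (fun x _ => hqd x)
    (hcw'.intervalIntegrable _ _) (hcq'.intervalIntegrable _ _)
  have hg1 : g 1 = 0 := by simp [hg]
  have hgm1 : g (-1) = 0 := by simp [hg]
  have hq1 : q.eval 1 = 0 := by simp [hq]
  have hqm1 : q.eval (-1) = 0 := by simp [hq]
  rw [hg1, hgm1, mul_zero, mul_zero, sub_zero, zero_sub] at I1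
  rw [hq1, hqm1, mul_zero, mul_zero, sub_zero, zero_sub] at I2
  have hMeq : ∫ x in (-1 : ℝ)..1, (derivative P).eval x * g x
      = ∫ x in (-1 : ℝ)..1, deriv w x * q.eval x := by
    apply intervalIntegral.integral_congr
    intro x _
    simp only [hg, hq, eval_mul, eval_sub, eval_one, eval_pow, eval_X]
    ring
  have hode : derivative q = -((k * (k + 1) : ℕ) : ℝ[X]) * P := legendre_ode k hk
  have hdq : ∫ x in (-1 : ℝ)..1, w x * (derivative q).eval x
      = -((k : ℝ) * (k + 1)) * ∫ x in (-1 : ℝ)..1, w x * P.eval x := by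
    rw [← intervalIntegral.integral_const_mul]
    apply intervalIntegral.integral_congr
    intro x _
    rw [hode]
    simp only [eval_mul, eval_neg, eval_natCast]
    push_cast
    ring
  calc ∫ x in (-1 : ℝ)..1, legendreOp w x * P.eval x
      = ∫ x in (-1 : ℝ)..1, P.eval x * legendreOp w x := by
        apply intervalIntegral.integral_congr; intro x _; ring
    _ = -∫ x in (-1 : ℝ)..1, (derivative P).eval x * g x := I1
    _ = -∫ x in (-1 : ℝ)..1, deriv w x * q.eval x := by rw [hMeq]
    _ = ∫ x in (-1 : ℝ)..1, w x * (derivative q).eval x := by rw [I2]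
    _ = -((k : ℝ) * (k + 1)) * ∫ x in (-1 : ℝ)..1, w x * P.eval x := hdq

/-- Iterated coefficient identity from the proof of Lemma 4.1 of the paper:
`(u, L_k) = (-(1/(k(k+1))))^l (ℒ^l u, L_k)` for a smooth function `u`,
`k ≥ 1` and `l ≥ 0`. -/
theorem legendre_coefficient_iterated
    (u : ℝ → ℝ) (hu : ContDiff ℝ (⊤ : ℕ∞) u) (k : ℕ) (hk : 1 ≤ k) (l : ℕ) :
    ∫ x in (-1 : ℝ)..1, u x * (legendreRodrigues k).eval x
      = (-(1 / ((k : ℝ) * (k + 1)))) ^ l *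
          ∫ x in (-1 : ℝ)..1,
            (legendreOp^[l] u) x * (legendreRodrigues k).eval x := by
  have hsm : ∀ n : ℕ, ContDiff ℝ ∞ (legendreOp^[n] u) := by
    intro n
    induction n with
    | zero => exact hu.of_le (by simp)
    | succ n ih => rw [Function.iterate_succ_apply']; exact legendreOp_contDiff ih
  have h0 : (0 : ℝ) < k := by exact_mod_cast hk
  have hc1 : (-(1 / ((k : ℝ) * (k + 1)))) * (-((k : ℝ) * ((k : ℝ) + 1))) = 1 := by
    field_simp
  induction l with
  | zero => simp
  | succ l ih =>
    have S := legendre_step (legendreOp^[l] u) (hsm l) k hk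
    rw [ih]
    simp only [Function.iterate_succ_apply']
    rw [S, pow_succ]
    linear_combination (-((-(1 / ((k : ℝ) * (k + 1)))) ^ l *
      (∫ x in (-1 : ℝ)..1, (legendreOp^[l] u) x * (legendreRodrigues k).eval x))) * hc1
end
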